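/- arXiv:2604.21582 — 3 statements merged into one kernel-verified Lean document; each statement's English description precedes it below -/
import Mathlib

section
/- Let $H_0$ and $H_V = H_0 + V$ be self-adjoint operators on a Hilbert space, with $V$ bounded, both bounded below by some $c \in \mathbb{R}$. Define $P_i(t) = (H_i - 1/4)^{-1/2}\sin(t\sqrt{H_i - 1/4})$ and $S_i(t) = \cos(t\sqrt{H_i - 1/4})$ for $i \in \{0, V\}$ via functional calculus. Then for all $t > 0$: $P_V(t) = P_0(t) - \int_0^t P_V(t_1)\,V\,P_0(t-t_1)\,dt_1$ (Duhamel formula for the sine wave propagator). -/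
open MeasureTheory intervalIntegral Set Filter Topology

set_option synthInstance.maxHeartbeats 1000000
set_option maxHeartbeats 1000000
set_option linter.unusedSectionVars false

section auxiliary
variable {H : Type*} [NormedAddCommGroup H] [NormedSpace ℝ H] [CompleteSpace H]

/-- Banach–Steinhaus on difference quotients: a strongly differentiable (at `s`) family of
operators which is strongly continuous is norm-Lipschitz at `s`, and the derivative values
form a bounded linear map. -/
lemma slope_ubp (S : ℝ → H →L[ℝ] H) (D : H → H) (s : ℝ)
    (hcont : ∀ u, Continuous fun σ => S σ u)
    (hder : ∀ u, HasDerivAt (fun σ => S σ u) (D u) s) :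
    ∃ C : ℝ, 0 ≤ C ∧ (∀ h : ℝ, |h| ≤ 1 → ‖S (s + h) - S s‖ ≤ C * |h|) ∧
      ∀ u, ‖D u‖ ≤ C * ‖u‖ := by
  set ι := {h : ℝ // h ≠ 0 ∧ |h| ≤ 1} with hι
  set g : ι → H →L[ℝ] H := fun i => (i.1)⁻¹ • (S (s + i.1) - S s) with hg
  have hgu : ∀ (i : ι) (u : H), g i u = (i.1)⁻¹ • (S (s + i.1) u - S s u) := by
    intro i u; simp [hg]
  have hpt : ∀ u : H, ∃ C, ∀ i : ι, ‖g i u‖ ≤ C := by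
    intro u
    have hq : Tendsto (fun h : ℝ => h⁻¹ • (S (s + h) u - S s u)) (𝓝[≠] 0) (𝓝 (D u)) :=
      (hder u).tendsto_slope_zero
    have hev : ∀ᶠ h in 𝓝[≠] (0:ℝ), ‖h⁻¹ • (S (s + h) u - S s u)‖ ≤ ‖D u‖ + 1 :=
      (hq.norm.eventually (eventually_le_nhds (lt_add_one ‖D u‖)))
    rw [eventually_nhdsWithin_iff, Metric.eventually_nhds_iff] at hev
    obtain ⟨δ, hδpos, hδ⟩ := hev
    have hc : ContinuousOn (fun h : ℝ => ‖S (s + h) u - S s u‖) (Icc (-1) 1) :=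
      (((hcont u).comp (continuous_const.add continuous_id)).sub
        continuous_const).norm.continuousOn
    obtain ⟨hmax, _, hKb'⟩ :=
      isCompact_Icc.exists_isMaxOn (by norm_num : (Icc (-1:ℝ) 1).Nonempty) hc
    have hKb := isMaxOn_iff.1 hKb'
    set K := ‖S (s + hmax) u - S s u‖ with hK
    refine ⟨max (‖D u‖ + 1) (δ⁻¹ * K), fun i => ?_⟩
    rcases lt_or_ge |i.1| δ with hlt | hge
    · have := hδ (by simpa [Real.dist_eq] using hlt) (by simp [i.2.1])
      rw [hgu]
      exact this.trans (le_max_left _ _)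
    · have h1 : ‖g i u‖ = |i.1|⁻¹ * ‖S (s + i.1) u - S s u‖ := by
        rw [hgu, norm_smul, norm_inv, Real.norm_eq_abs]
      have h2 : ‖S (s + i.1) u - S s u‖ ≤ K := hKb i.1 (abs_le.1 i.2.2)
      have h3 : |i.1|⁻¹ ≤ δ⁻¹ := inv_anti₀ hδpos hge
      refine le_trans ?_ (le_max_right _ _)
      rw [h1]
      exact mul_le_mul h3 h2 (norm_nonneg _) (by positivity)
  obtain ⟨C', hC'⟩ := banach_steinhaus hpt
  have hC'0 : ∀ i : ι, ‖g i‖ ≤ max C' 0 := fun i => (hC' i).trans (le_max_left _ _)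
  refine ⟨max C' 0, le_max_right _ _, ?_, ?_⟩
  · intro h hh
    rcases eq_or_ne h 0 with rfl | hne
    · simp
    · have hrepr : S (s + h) - S s = h • g ⟨h, hne, hh⟩ := by
        simp [hg, smul_smul, mul_inv_cancel₀ hne]
      rw [hrepr]
      have hns : ‖h • g ⟨h, hne, hh⟩‖ = |h| * ‖g ⟨h, hne, hh⟩‖ := by
        have := norm_smul h (g ⟨h, hne, hh⟩)
        simpa using this
      rw [hns, mul_comm]
      exact mul_le_mul_of_nonneg_right (hC'0 _) (abs_nonneg _)
  · intro u
    have hq : Tendsto (fun h : ℝ => h⁻¹ • (S (s + h) u - S s u)) (𝓝[≠] 0) (𝓝 (D u)) :=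
      (hder u).tendsto_slope_zero
    have hev : ∀ᶠ h in 𝓝[≠] (0:ℝ), ‖h⁻¹ • (S (s + h) u - S s u)‖ ≤ max C' 0 * ‖u‖ := by
      rw [eventually_nhdsWithin_iff, Metric.eventually_nhds_iff]
      refine ⟨1, one_pos, fun h hh hne => ?_⟩
      have hne' : h ≠ 0 := by simpa using hne
      have hle : |h| ≤ 1 := by
        rw [Real.dist_eq, sub_zero] at hh
        exact hh.le
      have : h⁻¹ • (S (s + h) u - S s u) = g ⟨h, hne', hle⟩ u := (hgu ⟨h, hne', hle⟩ u).symm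
      rw [this]
      exact ((g _).le_opNorm u).trans
        (mul_le_mul_of_nonneg_right (hC'0 _) (norm_nonneg _))
    exact le_of_tendsto hq.norm hev


/-- If a wave pair `(P, S)` with bounded generator `𝔸` solves the system strongly, then the
operator-valued curves are norm-differentiable with the expected derivatives. -/
lemma family_norm_deriv (P S : ℝ → H →L[ℝ] H) (𝔸 : H →L[ℝ] H) (hP0 : P 0 = 0)
    (hP' : ∀ (u : H) (s : ℝ), HasDerivAt (fun σ => P σ u) (S s u) s)
    (hS' : ∀ (u : H) (s : ℝ), HasDerivAt (fun σ => S σ u) (-(𝔸 (P s u))) s) :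
    (∀ s, HasDerivAt (fun σ : ℝ => P σ) (S s) s) ∧
      (∀ s, HasDerivAt (fun σ : ℝ => S σ) (-(𝔸.comp (P s))) s) := by
  have contSu : ∀ u, Continuous fun σ => S σ u := fun u =>
    continuous_iff_continuousAt.2 fun s => (hS' u s).continuousAt
  have contPu : ∀ u, Continuous fun σ => P σ u := fun u =>
    continuous_iff_continuousAt.2 fun s => (hP' u s).continuousAt
  -- operator-norm continuity of S
  have ncS : Continuous fun σ : ℝ => S σ := by
    rw [continuous_iff_continuousAt]
    intro s
    obtain ⟨C, hC0, hlip, -⟩ := slope_ubp S (fun u => -(𝔸 (P s u))) s contSu (fun u => hS' u s)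
    rw [Metric.continuousAt_iff]
    intro ε hε
    refine ⟨min 1 (ε / (C + 1)), by positivity, fun {σ} hσ => ?_⟩
    have h1 : |σ - s| ≤ 1 := le_of_lt (lt_of_lt_of_le hσ (min_le_left _ _))
    have h2 := hlip (σ - s) h1
    rw [add_sub_cancel] at h2
    rw [dist_eq_norm]
    calc ‖S σ - S s‖ ≤ C * |σ - s| := h2
      _ ≤ C * (ε / (C + 1)) := by
          refine mul_le_mul_of_nonneg_left ?_ hC0
          have := lt_of_lt_of_le hσ (min_le_right _ _)
          rw [Real.dist_eq] at this
          exact this.le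
      _ < ε := by
          rw [div_eq_inv_mul, ← mul_assoc]
          have hlt : C * (C + 1)⁻¹ < 1 := by
            rw [mul_inv_lt_iff₀ (by positivity), one_mul]
            linarith
          calc C * (C + 1)⁻¹ * ε < 1 * ε := by
                exact mul_lt_mul_of_pos_right hlt hε
            _ = ε := one_mul ε
  -- P as an operator-valued integral of S
  have hSint : ∀ a b : ℝ, IntervalIntegrable (fun σ => S σ) volume a b :=
    fun a b => ncS.intervalIntegrable a b
  have eqP : ∀ s : ℝ, P s = ∫ σ in (0:ℝ)..s, S σ := by
    intro s
    ext u
    rw [ContinuousLinearMap.intervalIntegral_apply (hSint 0 s) u]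
    have := intervalIntegral.integral_eq_sub_of_hasDerivAt
      (f := fun σ => P σ u) (f' := fun σ => S σ u)
      (fun σ _ => hP' u σ) ((contSu u).intervalIntegrable 0 s)
    simpa [hP0] using this.symm
  have ndP : ∀ s, HasDerivAt (fun σ : ℝ => P σ) (S s) s := by
    intro s
    have h1 : HasDerivAt (fun σ : ℝ => ∫ τ in (0:ℝ)..σ, S τ) (S s) s :=
      intervalIntegral.integral_hasDerivAt_right (hSint 0 s)
        (ncS.stronglyMeasurableAtFilter _ _) ncS.continuousAt
    have h2 : (fun σ : ℝ => P σ) = fun σ : ℝ => ∫ τ in (0:ℝ)..σ, S τ := funext eqP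
    rw [h2]
    exact h1
  -- norm continuity of P and of 𝔸 ∘ P
  have ncP : Continuous fun σ : ℝ => P σ :=
    continuous_iff_continuousAt.2 fun s => (ndP s).continuousAt
  have ncAP : Continuous fun σ : ℝ => 𝔸.comp (P σ) :=
    ((ContinuousLinearMap.compL ℝ H H H 𝔸).continuous).comp ncP
  have hAPint : ∀ a b : ℝ, IntervalIntegrable (fun σ => 𝔸.comp (P σ)) volume a b :=
    fun a b => ncAP.intervalIntegrable a b
  have eqS : ∀ s : ℝ, S s = S 0 - ∫ σ in (0:ℝ)..s, 𝔸.comp (P σ) := by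
    intro s
    ext u
    have h1 := intervalIntegral.integral_eq_sub_of_hasDerivAt
      (f := fun σ => S σ u) (f' := fun σ => -(𝔸 (P σ u)))
      (fun σ _ => hS' u σ) (((𝔸.continuous.comp (contPu u)).neg).intervalIntegrable 0 s)
    have h3 : -∫ σ in (0:ℝ)..s, 𝔸 ((P σ) u) = S s u - S 0 u := by
      rw [← intervalIntegral.integral_neg]
      simpa using h1
    have h2 : ∫ σ in (0:ℝ)..s, 𝔸 ((P σ) u) = S 0 u - S s u :=
      (neg_eq_iff_eq_neg.1 h3).trans (neg_sub _ _)
    rw [ContinuousLinearMap.sub_apply,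
      ContinuousLinearMap.intervalIntegral_apply (hAPint 0 s) u]
    simp only [ContinuousLinearMap.comp_apply]
    rw [h2]
    abel
  have ndS : ∀ s, HasDerivAt (fun σ : ℝ => S σ) (-(𝔸.comp (P s))) s := by
    intro s
    have h1 : HasDerivAt (fun σ : ℝ => ∫ τ in (0:ℝ)..σ, 𝔸.comp (P τ)) (𝔸.comp (P s)) s :=
      intervalIntegral.integral_hasDerivAt_right (hAPint 0 s)
        (ncAP.stronglyMeasurableAtFilter _ _) ncAP.continuousAt
    have h2 : HasDerivAt (fun σ : ℝ => S 0 - ∫ τ in (0:ℝ)..σ, 𝔸.comp (P τ))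
        (-(𝔸.comp (P s))) s := h1.const_sub _
    have h3 : (fun σ : ℝ => S σ) = fun σ : ℝ => S 0 - ∫ τ in (0:ℝ)..σ, 𝔸.comp (P τ) :=
      funext eqS
    rw [h3]
    exact h2
  exact ⟨ndP, ndS⟩


/-- A wave pair with bounded generator commutes with its generator. -/
lemma generator_comm (P S : ℝ → H →L[ℝ] H) (𝔸 : H →L[ℝ] H) (hP0 : P 0 = 0) (hS0 : S 0 = 1)
    (hP' : ∀ (u : H) (s : ℝ), HasDerivAt (fun σ => P σ u) (S s u) s)
    (hS' : ∀ (u : H) (s : ℝ), HasDerivAt (fun σ => S σ u) (-(𝔸 (P s u))) s)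
    (x : H) {s : ℝ} (hs : 0 ≤ s) : 𝔸 (P s x) = P s (𝔸 x) := by
  set F : ℝ → H × H := fun σ =>
    (𝔸 (P σ x) - P σ (𝔸 x), 𝔸 (S σ x) - S σ (𝔸 x)) with hF
  set F' : ℝ → H × H := fun σ =>
    (𝔸 (S σ x) - S σ (𝔸 x), -(𝔸 (𝔸 (P σ x) - P σ (𝔸 x)))) with hF'
  have hder : ∀ σ, HasDerivAt F (F' σ) σ := by
    intro σ
    have h1 : HasDerivAt (fun τ => 𝔸 (P τ x)) (𝔸 (S σ x)) σ :=
      (𝔸.hasFDerivAt.comp_hasDerivAt σ (hP' x σ))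
    have h2 : HasDerivAt (fun τ => P τ (𝔸 x)) (S σ (𝔸 x)) σ := hP' (𝔸 x) σ
    have h3 : HasDerivAt (fun τ => 𝔸 (S τ x)) (𝔸 (-(𝔸 (P σ x)))) σ :=
      (𝔸.hasFDerivAt.comp_hasDerivAt σ (hS' x σ))
    have h4 : HasDerivAt (fun τ => S τ (𝔸 x)) (-(𝔸 (P σ (𝔸 x)))) σ := hS' (𝔸 x) σ
    have hy : HasDerivAt (fun τ => 𝔸 (P τ x) - P τ (𝔸 x))
        (𝔸 (S σ x) - S σ (𝔸 x)) σ := h1.sub h2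
    have hz : HasDerivAt (fun τ => 𝔸 (S τ x) - S τ (𝔸 x))
        (-(𝔸 (𝔸 (P σ x) - P σ (𝔸 x)))) σ := by
      have := h3.sub h4
      have heq : 𝔸 (-(𝔸 (P σ x))) - -(𝔸 (P σ (𝔸 x)))
          = -(𝔸 (𝔸 (P σ x) - P σ (𝔸 x))) := by
        rw [map_neg, map_sub]
        abel
      rwa [heq] at this
    exact hy.prodMk hz
  -- Gronwall with δ = 0, ε = 0, K = 1 + ‖𝔸‖
  have hbound : ∀ τ ∈ Ico 0 s, ‖F' τ‖ ≤ (1 + ‖𝔸‖) * ‖F τ‖ + 0 := by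
    intro τ _
    rw [add_zero]
    have hn1 : ‖F' τ‖ = max ‖𝔸 (S τ x) - S τ (𝔸 x)‖ ‖𝔸 (𝔸 (P τ x) - P τ (𝔸 x))‖ := by
      rw [hF', Prod.norm_def, norm_neg]
    have hn2 : ‖F τ‖ = max ‖𝔸 (P τ x) - P τ (𝔸 x)‖ ‖𝔸 (S τ x) - S τ (𝔸 x)‖ := by
      rw [hF, Prod.norm_def]
    rw [hn1, hn2]
    set a := ‖𝔸 (P τ x) - P τ (𝔸 x)‖
    set b := ‖𝔸 (S τ x) - S τ (𝔸 x)‖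
    have ha : 0 ≤ a := norm_nonneg _
    have hb : 0 ≤ b := norm_nonneg _
    have hA : 0 ≤ ‖𝔸‖ := norm_nonneg _
    have h𝔸a : ‖𝔸 (𝔸 (P τ x) - P τ (𝔸 x))‖ ≤ ‖𝔸‖ * a := 𝔸.le_opNorm _
    have hmax0 : 0 ≤ max a b := le_trans ha (le_max_left a b)
    refine max_le ?_ (h𝔸a.trans ?_)
    · exact (le_max_right a b).trans (le_mul_of_one_le_left hmax0 (by linarith))
    · calc ‖𝔸‖ * a ≤ ‖𝔸‖ * max a b := mul_le_mul_of_nonneg_left (le_max_left _ _) hA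
        _ ≤ (1 + ‖𝔸‖) * max a b := mul_le_mul_of_nonneg_right (by linarith) hmax0
  have hF0 : F 0 = 0 := by
    have h1 : P 0 x = 0 := by rw [hP0]; rfl
    have h2 : P 0 (𝔸 x) = 0 := by rw [hP0]; rfl
    have h3 : S 0 x = x := by rw [hS0]; rfl
    have h4 : S 0 (𝔸 x) = 𝔸 x := by rw [hS0]; rfl
    simp [hF, h1, h2, h3, h4]
  have key := norm_le_gronwallBound_of_norm_deriv_right_le
    (f := F) (f' := F') (δ := 0) (K := 1 + ‖𝔸‖) (ε := 0) (a := 0) (b := s)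
    (fun τ _ => (hder τ).continuousAt.continuousWithinAt)
    (fun τ _ => (hder τ).hasDerivWithinAt)
    (by rw [hF0]; simp)
    hbound
  have hkey := key s ⟨hs, le_rfl⟩
  rw [gronwallBound_ε0_δ0] at hkey
  have hFs : F s = 0 := norm_le_zero_iff.1 hkey
  have hfst : 𝔸 (P s x) - P s (𝔸 x) = 0 := congrArg Prod.fst hFs
  exact sub_eq_zero.1 hfst

end auxiliary

/-- Duhamel formula for the sine wave propagator.  Here `A₀` and `A_V = A₀ + V`
represent the shifted operators `H₀ - 1/4` and `H_V - 1/4` (with `V` bounded),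
`P₀, P_V` are the sine propagators and `S₀, S_V` the cosine propagators, characterized
by the wave equations `∂ₜ P_i = S_i`, `∂ₜ S_i = -A_i P_i`, `P_i(0) = 0`, `S_i(0) = 1`.
Then `P_V(t) = P₀(t) - ∫₀ᵗ P_V(t₁) V P₀(t - t₁) dt₁` for all `t > 0`. -/
theorem duhamel_formula
    {H : Type*} [NormedAddCommGroup H] [InnerProductSpace ℝ H] [CompleteSpace H]
    (A₀ : H →ₗ[ℝ] H) (V : H →L[ℝ] H)
    (P₀ S₀ PV SV : ℝ → H →L[ℝ] H)
    (hP₀0 : P₀ 0 = 0) (hS₀0 : S₀ 0 = 1) (hPV0 : PV 0 = 0) (hSV0 : SV 0 = 1)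
    (hP₀' : ∀ (u : H) (t : ℝ), HasDerivAt (fun s => P₀ s u) (S₀ t u) t)
    (hS₀' : ∀ (u : H) (t : ℝ), HasDerivAt (fun s => S₀ s u) (-(A₀ (P₀ t u))) t)
    (hPV' : ∀ (u : H) (t : ℝ), HasDerivAt (fun s => PV s u) (SV t u) t)
    (hSV' : ∀ (u : H) (t : ℝ),
      HasDerivAt (fun s => SV s u) (-((A₀ + (V : H →ₗ[ℝ] H)) (PV t u))) t)
    (t : ℝ) (ht : 0 < t) (u : H) :
    PV t u = P₀ t u - ∫ t₁ in (0:ℝ)..t, PV t₁ (V (P₀ (t - t₁) u)) := by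
  -- strong continuity of all the curves
  have contS₀u : ∀ v, Continuous fun σ => S₀ σ v := fun v =>
    continuous_iff_continuousAt.2 fun s => (hS₀' v s).continuousAt
  have contP₀u : ∀ v, Continuous fun σ => P₀ σ v := fun v =>
    continuous_iff_continuousAt.2 fun s => (hP₀' v s).continuousAt
  -- ### Step 1 : `A₀` is a bounded operator
  obtain ⟨C₀, hC₀0, hlip₀, -⟩ :=
    slope_ubp S₀ (fun v => -(A₀ (P₀ 0 v))) 0 contS₀u (fun v => hS₀' v 0)
  set s₀ : ℝ := min 1 (1 / (2 * (C₀ + 1))) with hs₀def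
  have hs₀pos : 0 < s₀ := lt_min one_pos (by positivity)
  have hs₀le1 : s₀ ≤ 1 := min_le_left _ _
  have hs₀C : C₀ * s₀ ≤ 1 / 2 := by
    have h1 : s₀ ≤ 1 / (2 * (C₀ + 1)) := min_le_right _ _
    have h2 : C₀ * s₀ ≤ C₀ * (1 / (2 * (C₀ + 1))) :=
      mul_le_mul_of_nonneg_left h1 hC₀0
    have h3 : C₀ * (1 / (2 * (C₀ + 1))) ≤ 1 / 2 := by
      have hp : (0:ℝ) < 2 * (C₀ + 1) := by positivity
      rw [mul_one_div, div_le_iff₀ hp]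
      nlinarith
    linarith
  -- operator-norm bound on `S₀ σ - 1` for `σ ∈ (0, s₀]`
  have hS₀near : ∀ σ : ℝ, σ ∈ Set.Ioc (0:ℝ) s₀ → ‖S₀ σ - 1‖ ≤ C₀ * s₀ := by
    intro σ hσ
    have h1 : |σ| ≤ 1 := by
      rw [abs_of_pos hσ.1]
      exact hσ.2.trans hs₀le1
    have h2 := hlip₀ σ h1
    rw [zero_add, hS₀0] at h2
    refine h2.trans ?_
    have : |σ| ≤ s₀ := by rw [abs_of_pos hσ.1]; exact hσ.2
    exact mul_le_mul_of_nonneg_left this hC₀0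
  -- `P₀ s₀` is `s₀ • (1 - x)` with `‖x‖ < 1`
  have hPdiff : ∀ v : H, P₀ s₀ v - s₀ • v = ∫ σ in (0:ℝ)..s₀, (S₀ σ v - v) := by
    intro v
    have hd : ∀ σ ∈ uIcc (0:ℝ) s₀, HasDerivAt (fun τ => P₀ τ v - τ • v) (S₀ σ v - v) σ := by
      intro σ _
      have h1 : HasDerivAt (fun τ : ℝ => τ • v) v σ := by
        simpa using (hasDerivAt_id σ).smul_const v
      exact (hP₀' v σ).sub h1
    have := intervalIntegral.integral_eq_sub_of_hasDerivAt hd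
      (((contS₀u v).sub continuous_const).intervalIntegrable 0 s₀)
    rw [this]
    simp [hP₀0]
  have hPbound : ∀ v : H, ‖P₀ s₀ v - s₀ • v‖ ≤ (C₀ * s₀) * s₀ * ‖v‖ := by
    intro v
    rw [hPdiff v]
    have hnb : ∀ σ ∈ Set.uIoc (0:ℝ) s₀, ‖S₀ σ v - v‖ ≤ C₀ * s₀ * ‖v‖ := by
      intro σ hσ
      rw [Set.uIoc_of_le hs₀pos.le] at hσ
      have h1 := hS₀near σ hσ
      have h2 : S₀ σ v - v = (S₀ σ - 1) v := by simp
      rw [h2]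
      calc ‖(S₀ σ - 1) v‖ ≤ ‖S₀ σ - 1‖ * ‖v‖ := (S₀ σ - 1).le_opNorm v
        _ ≤ C₀ * s₀ * ‖v‖ := mul_le_mul_of_nonneg_right h1 (norm_nonneg v)
    have := intervalIntegral.norm_integral_le_of_norm_le_const hnb
    rw [sub_zero, abs_of_pos hs₀pos] at this
    calc ‖∫ σ in (0:ℝ)..s₀, (S₀ σ v - v)‖ ≤ C₀ * s₀ * ‖v‖ * s₀ := this
      _ = C₀ * s₀ * s₀ * ‖v‖ := by ring
  set x : H →L[ℝ] H := 1 - s₀⁻¹ • P₀ s₀ with hxdef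
  have hxnorm : ‖x‖ ≤ 1 / 2 := by
    refine ContinuousLinearMap.opNorm_le_bound x (by norm_num) fun v => ?_
    have h1 : x v = s₀⁻¹ • (s₀ • v - P₀ s₀ v) := by
      rw [hxdef]
      simp [smul_sub, smul_smul, inv_mul_cancel₀ hs₀pos.ne']
    rw [h1, norm_smul, norm_inv, Real.norm_eq_abs, abs_of_pos hs₀pos, ← norm_neg,
      neg_sub]
    calc s₀⁻¹ * ‖P₀ s₀ v - s₀ • v‖ ≤ s₀⁻¹ * ((C₀ * s₀) * s₀ * ‖v‖) :=
          mul_le_mul_of_nonneg_left (hPbound v) (by positivity)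
      _ = (C₀ * s₀) * ‖v‖ := by
          field_simp
      _ ≤ (1 / 2) * ‖v‖ := mul_le_mul_of_nonneg_right hs₀C (norm_nonneg v)
  have hxlt : ‖x‖ < 1 := lt_of_le_of_lt hxnorm (by norm_num)
  set w : (H →L[ℝ] H)ˣ := Units.oneSub x hxlt with hwdef
  have hwval : (w : H →L[ℝ] H) = s₀⁻¹ • P₀ s₀ := by
    rw [hwdef, Units.val_oneSub, hxdef]
    simp
  -- solve `P₀ s₀ ? = v`
  have hsolve : ∀ v : H, P₀ s₀ (s₀⁻¹ • ((w⁻¹ : (H →L[ℝ] H)ˣ) : H →L[ℝ] H) v) = v := by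
    intro v
    have h1 : (w : H →L[ℝ] H) (((w⁻¹ : (H →L[ℝ] H)ˣ) : H →L[ℝ] H) v) = v := by
      have := w.mul_inv
      calc (w : H →L[ℝ] H) (((w⁻¹ : (H →L[ℝ] H)ˣ) : H →L[ℝ] H) v)
          = ((w : H →L[ℝ] H) * ((w⁻¹ : (H →L[ℝ] H)ˣ) : H →L[ℝ] H)) v := rfl
        _ = v := by rw [this]; rfl
    rw [ContinuousLinearMap.map_smul]
    rw [hwval] at h1
    simpa using h1
  obtain ⟨C₁, hC₁0, -, hD₁⟩ :=
    slope_ubp S₀ (fun v => -(A₀ (P₀ s₀ v))) s₀ contS₀u (fun v => hS₀' v s₀)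
  have hD₁' : ∀ v, ‖A₀ (P₀ s₀ v)‖ ≤ C₁ * ‖v‖ := by
    intro v
    have := hD₁ v
    rwa [norm_neg] at this
  set Minv : ℝ := ‖((w⁻¹ : (H →L[ℝ] H)ˣ) : H →L[ℝ] H)‖ with hMinv
  have hA₀bdd : ∀ v, ‖A₀ v‖ ≤ (C₁ * (s₀⁻¹ * Minv)) * ‖v‖ := by
    intro v
    have h0 := hsolve v
    calc ‖A₀ v‖ = ‖A₀ (P₀ s₀ (s₀⁻¹ • ((w⁻¹ : (H →L[ℝ] H)ˣ) : H →L[ℝ] H) v))‖ := by rw [h0]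
      _ ≤ C₁ * ‖s₀⁻¹ • ((w⁻¹ : (H →L[ℝ] H)ˣ) : H →L[ℝ] H) v‖ := hD₁' _
      _ ≤ (C₁ * (s₀⁻¹ * Minv)) * ‖v‖ := by
          rw [norm_smul, norm_inv, Real.norm_eq_abs, abs_of_pos hs₀pos]
          have h2 : ‖((w⁻¹ : (H →L[ℝ] H)ˣ) : H →L[ℝ] H) v‖ ≤ Minv * ‖v‖ :=
            ContinuousLinearMap.le_opNorm _ v
          calc C₁ * (s₀⁻¹ * ‖((w⁻¹ : (H →L[ℝ] H)ˣ) : H →L[ℝ] H) v‖)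
              ≤ C₁ * (s₀⁻¹ * (Minv * ‖v‖)) := by
                refine mul_le_mul_of_nonneg_left ?_ hC₁0
                exact mul_le_mul_of_nonneg_left h2 (by positivity)
            _ = (C₁ * (s₀⁻¹ * Minv)) * ‖v‖ := by ring
  set A0c : H →L[ℝ] H := A₀.mkContinuous (C₁ * (s₀⁻¹ * Minv)) hA₀bdd with hA0cdef
  have hA0capp : ∀ v, A0c v = A₀ v := fun v => rfl
  set AVc : H →L[ℝ] H := A0c + V with hAVcdef
  have hAVcapp : ∀ v, AVc v = A₀ v + V v := fun v => rfl
  -- rewritten derivative hypotheses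
  have hS₀'' : ∀ (v : H) (s : ℝ), HasDerivAt (fun σ => S₀ σ v) (-(A0c (P₀ s v))) s :=
    fun v s => hS₀' v s
  have hSV'' : ∀ (v : H) (s : ℝ), HasDerivAt (fun σ => SV σ v) (-(AVc (PV s v))) s := by
    intro v s
    have h1 := hSV' v s
    have h2 : ((A₀ + (V : H →ₗ[ℝ] H)) (PV s v)) = AVc (PV s v) := by
      rw [hAVcapp]
      simp
    rwa [h2] at h1
  -- ### Step 2 : norm differentiability
  obtain ⟨ndP₀, ndS₀⟩ := family_norm_deriv P₀ S₀ A0c hP₀0 hP₀' hS₀''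
  obtain ⟨ndPV, ndSV⟩ := family_norm_deriv PV SV AVc hPV0 hPV' hSV''
  -- ### Step 3 : commutation
  have comm : ∀ (y : H) {s : ℝ}, 0 ≤ s → AVc (PV s y) = PV s (AVc y) :=
    fun y {s} hs => generator_comm PV SV AVc hPV0 hSV0 hPV' hSV'' y hs
  -- ### Step 4 : the telescoping function
  set φ : ℝ → H := fun σ => PV σ (V (P₀ (t - σ) u)) with hφdef
  have ncPV : Continuous fun σ : ℝ => PV σ :=
    continuous_iff_continuousAt.2 fun s => (ndPV s).continuousAt
  have ncSV : Continuous fun σ : ℝ => SV σ :=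
    continuous_iff_continuousAt.2 fun s => (ndSV s).continuousAt
  have contφ : Continuous φ := by
    have h1 : Continuous fun σ : ℝ => V (P₀ (t - σ) u) :=
      V.continuous.comp ((contP₀u u).comp (continuous_const.sub continuous_id))
    exact ncPV.clm_apply h1
  set g : ℝ → H :=
    fun σ => PV σ (S₀ (t - σ) u) + SV σ (P₀ (t - σ) u) + ∫ τ in (0:ℝ)..σ, φ τ with hgdef
  have hinner : ∀ s : ℝ, HasDerivAt (fun σ : ℝ => t - σ) (-1) s := fun s =>
    (hasDerivAt_id s).const_sub t
  have hgder : ∀ s : ℝ, 0 ≤ s → HasDerivAt g 0 s := by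
    intro s hs
    have hin1 : HasDerivAt (fun σ : ℝ => S₀ (t - σ) u) (A0c (P₀ (t - s) u)) s := by
      have houter := hS₀'' u (t - s)
      have := HasDerivAt.scomp_of_eq (h := fun σ : ℝ => t - σ) (x := s) houter (hinner s) rfl
      simpa [Function.comp_def] using this
    have hin2 : HasDerivAt (fun σ : ℝ => P₀ (t - σ) u) (-(S₀ (t - s) u)) s := by
      have houter := hP₀' u (t - s)
      have := HasDerivAt.scomp_of_eq (h := fun σ : ℝ => t - σ) (x := s) houter (hinner s) rfl
      simpa [Function.comp_def] using this
    have hd1 : HasDerivAt (fun σ : ℝ => PV σ (S₀ (t - σ) u))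
        (SV s (S₀ (t - s) u) + PV s (A0c (P₀ (t - s) u))) s := (ndPV s).clm_apply hin1
    have hd2 : HasDerivAt (fun σ : ℝ => SV σ (P₀ (t - σ) u))
        ((-(AVc.comp (PV s))) (P₀ (t - s) u) + SV s (-(S₀ (t - s) u))) s :=
      (ndSV s).clm_apply hin2
    have hd3 : HasDerivAt (fun σ : ℝ => ∫ τ in (0:ℝ)..σ, φ τ) (φ s) s :=
      intervalIntegral.integral_hasDerivAt_right (contφ.intervalIntegrable 0 s)
        (contφ.stronglyMeasurableAtFilter _ _) contφ.continuousAt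
    have htotal := (hd1.add hd2).add hd3
    have hval : (SV s (S₀ (t - s) u) + PV s (A0c (P₀ (t - s) u)) +
        ((-(AVc.comp (PV s))) (P₀ (t - s) u) + SV s (-(S₀ (t - s) u)))) + φ s = 0 := by
      set y := P₀ (t - s) u with hydef
      have hc : AVc (PV s y) = PV s (AVc y) := comm y hs
      have h₁ : (-(AVc.comp (PV s))) y = -(PV s (AVc y)) := by
        rw [← hc]
        rfl
      have h₂ : AVc y = A0c y + V y := rfl
      have h₃ : φ s = PV s (V y) := rfl
      rw [h₁, h₂, h₃, map_neg, map_add]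
      abel
    rw [hval] at htotal
    exact htotal
  -- ### Step 5 : conclude
  have hgcont : ContinuousOn g (Icc 0 t) := by
    have h1 : Continuous g := by
      have hc1 : Continuous fun σ : ℝ => PV σ (S₀ (t - σ) u) :=
        ncPV.clm_apply ((contS₀u u).comp (continuous_const.sub continuous_id))
      have hc2 : Continuous fun σ : ℝ => SV σ (P₀ (t - σ) u) :=
        ncSV.clm_apply ((contP₀u u).comp (continuous_const.sub continuous_id))
      have hc3 : Continuous fun σ : ℝ => ∫ τ in (0:ℝ)..σ, φ τ :=
        continuous_iff_continuousAt.2 fun s =>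
          (intervalIntegral.integral_hasDerivAt_right (contφ.intervalIntegrable 0 s)
            (contφ.stronglyMeasurableAtFilter _ _) contφ.continuousAt).continuousAt
      exact (hc1.add hc2).add hc3
    exact h1.continuousOn
  have hconst := constant_of_has_deriv_right_zero hgcont
    (fun s hs => (hgder s hs.1).hasDerivWithinAt)
  have hgt := hconst t (right_mem_Icc.2 ht.le)
  -- compute g t and g 0
  have hgt_val : g t = PV t u + ∫ τ in (0:ℝ)..t, φ τ := by
    rw [hgdef]
    simp only [sub_self]
    rw [hS₀0, hP₀0]
    simp
  have hg0_val : g 0 = P₀ t u := by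
    rw [hgdef]
    simp only [sub_zero]
    rw [hPV0, hSV0]
    simp
  rw [hgt_val, hg0_val] at hgt
  -- the statement's integral is `∫ τ in 0..t, φ τ`
  have : PV t u = P₀ t u - ∫ τ in (0:ℝ)..t, φ τ := by
    rw [← hgt]
    abel
  exact this
end

section
/- Let $h(t,\lambda) = (\lambda-1/4)^{-1/2}\sin(t\sqrt{\lambda-1/4})$ and $\tilde{h}_\tau(t,\lambda) = \cos(\tau t)\,h(t,\lambda)$. Suppose $1/4 < m < a, b < \infty$, and $\sqrt{a - 1/4} - \sqrt{b - 1/4} - \tau \in (-\delta, \delta)$ with $0 < \delta < \frac{2}{9}\sqrt{m - 1/4}$. Then for $T = \pi/(2\delta)$, $\frac{1}{T}\left|\int_0^T \tilde{h}_\tau(t,a)\,h(t,b)\,dt\right| > \frac{1}{8\pi\sqrt{a - 1/4}\sqrt{b - 1/4}}$. -/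
open MeasureTheory intervalIntegral Real

/-- The spectral symbol of the sine wave propagator. -/
noncomputable def waveSymbol (t lam : ℝ) : ℝ :=
  Real.sin (t * Real.sqrt (lam - 1/4)) / Real.sqrt (lam - 1/4)

/-- The modulated spectral symbol `h̃_τ(t,λ) = cos(τt) h(t,λ)`. -/
noncomputable def waveSymbolMod (τ t lam : ℝ) : ℝ :=
  Real.cos (τ * t) * waveSymbol t lam

lemma intCos (k T : ℝ) (hk : k ≠ 0) :
    ∫ t in (0:ℝ)..T, Real.cos (k * t) = Real.sin (k * T) / k := by
  rw [intervalIntegral.integral_comp_mul_left (fun x => Real.cos x) hk]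
  simp [integral_cos, div_eq_inv_mul]

lemma lowBound (k T : ℝ) (hT : 0 ≤ T) (h : |k * T| ≤ π / 2) :
    2 / π * T ≤ ∫ t in (0:ℝ)..T, Real.cos (k * t) := by
  rcases eq_or_ne k 0 with hk | hk
  · simp only [hk, zero_mul, Real.cos_zero]
    rw [intervalIntegral.integral_const]
    simp only [smul_eq_mul, mul_one, sub_zero]
    have h1 : 2 / π ≤ 1 := by
      rw [div_le_one Real.pi_pos]; linarith [Real.pi_gt_three]
    nlinarith
  rw [intCos k T hk]
  rcases hk.lt_or_gt with hk' | hk'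
  · -- k < 0
    have h1 : 0 ≤ -(k * T) := by nlinarith
    have h2 : -(k * T) ≤ π / 2 := by
      have := abs_le.1 h; linarith [this.1]
    have := Real.mul_le_sin h1 h2
    rw [Real.sin_neg] at this
    rw [le_div_iff_of_neg hk']
    nlinarith
  · -- 0 < k
    have h1 : 0 ≤ k * T := by positivity
    have h2 : k * T ≤ π / 2 := by have := abs_le.1 h; linarith [this.2]
    have := Real.mul_le_sin h1 h2
    rw [le_div_iff₀ hk']
    nlinarith

lemma midBoundPos (k T : ℝ) (hk : 0 < k) (hT : 0 < T) :
    -(T / π) ≤ Real.sin (k * T) / k := by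
  rcases le_or_gt (k * T) π with h | h
  · have : 0 ≤ Real.sin (k * T) := Real.sin_nonneg_of_nonneg_of_le_pi (by positivity) h
    have : 0 ≤ Real.sin (k * T) / k := by positivity
    have hπ : 0 ≤ T / π := by positivity
    linarith
  · have h1 : (-1 : ℝ) ≤ Real.sin (k * T) := Real.neg_one_le_sin _
    have hπ : 0 < π := Real.pi_pos
    rw [le_div_iff₀ hk]
    have : -(T / π) * k = -(T * k / π) := by ring
    rw [this]
    rw [neg_le]
    have : T * k / π ≥ 1 := by
      rw [ge_iff_le, le_div_iff₀ hπ]; nlinarith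
    linarith

lemma midBound (k T : ℝ) (hT : 0 < T) :
    -(T / π) ≤ ∫ t in (0:ℝ)..T, Real.cos (k * t) := by
  have hπ : 0 < π := Real.pi_pos
  rcases eq_or_ne k 0 with hk | hk
  · simp only [hk, zero_mul, Real.cos_zero]
    rw [intervalIntegral.integral_const]
    simp only [smul_eq_mul, mul_one, sub_zero]
    have : 0 ≤ T / π := by positivity
    linarith
  rw [intCos k T hk]
  rcases hk.lt_or_gt with hk' | hk'
  · rw [show Real.sin (k * T) / k = Real.sin (-k * T) / (-k) by
      rw [neg_mul, Real.sin_neg, neg_div_neg_eq]]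
    exact midBoundPos (-k) T (by linarith) hT
  · exact midBoundPos k T hk' hT

lemma highBound (k T : ℝ) (hk : k ≠ 0) :
    |∫ t in (0:ℝ)..T, Real.cos (k * t)| ≤ 1 / |k| := by
  rw [intCos k T hk, abs_div]
  gcongr
  exact abs_le.2 ⟨Real.neg_one_le_sin _, Real.sin_le_one _⟩

lemma trig4 (x y z : ℝ) :
    Real.cos z * Real.sin x * Real.sin y * 4 =
      Real.cos (x - y - z) + Real.cos (x - y + z)
        - Real.cos (x + y - z) - Real.cos (x + y + z) := by
  simp only [Real.cos_add, Real.cos_sub, Real.sin_add, Real.sin_sub]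
  ring

/-- Resonance lower bound: if `1/4 < m < a, b` and `√(a-1/4) - √(b-1/4) - τ ∈ (-δ,δ)`
with `0 < δ < (2/9)√(m-1/4)`, then for `T = π/(2δ)` we have
`(1/T) |∫₀ᵀ h̃_τ(t,a) h(t,b) dt| > 1/(8π √(a-1/4) √(b-1/4))`. -/
theorem resonance_lower_bound (τ m a b δ : ℝ)
    (hm : 1/4 < m) (hma : m < a) (hmb : m < b)
    (hδ0 : 0 < δ) (hδ : δ < (2/9) * Real.sqrt (m - 1/4))
    (hres : Real.sqrt (a - 1/4) - Real.sqrt (b - 1/4) - τ ∈ Set.Ioo (-δ) δ) :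
    (1 / (Real.pi / (2 * δ))) *
        |∫ t in (0:ℝ)..(Real.pi / (2 * δ)), waveSymbolMod τ t a * waveSymbol t b|
      > 1 / (8 * Real.pi * Real.sqrt (a - 1/4) * Real.sqrt (b - 1/4)) := by
  have hπ : 0 < π := Real.pi_pos
  set α := Real.sqrt (a - 1/4) with hαdef
  set β := Real.sqrt (b - 1/4) with hβdef
  set μ := Real.sqrt (m - 1/4) with hμdef
  set T := π / (2 * δ) with hTdef
  have hμ0 : 0 < μ := Real.sqrt_pos.2 (by linarith)
  have hαμ : μ < α := Real.sqrt_lt_sqrt (by linarith) (by linarith)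
  have hβμ : μ < β := Real.sqrt_lt_sqrt (by linarith) (by linarith)
  have hα0 : 0 < α := lt_trans hμ0 hαμ
  have hβ0 : 0 < β := lt_trans hμ0 hβμ
  have hT0 : 0 < T := by positivity
  have h9δ : 9 * δ < 2 * μ := by nlinarith
  set ω := α - β - τ with hωdef
  set k2 := α - β + τ with hk2def
  set k3 := α + β - τ with hk3def
  set k4 := α + β + τ with hk4def
  obtain ⟨hres1, hres2⟩ := hres
  have hk3pos : 8 * δ < k3 := by
    have : k3 = ω + 2 * β := by rw [hk3def, hωdef]; ring
    rw [this]; nlinarith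
  have hk4pos : 8 * δ < k4 := by
    have : k4 = 2 * α - ω := by rw [hk4def, hωdef]; ring
    rw [this]; nlinarith
  -- pointwise trig decomposition
  have key : ∀ t : ℝ, waveSymbolMod τ t a * waveSymbol t b =
      (Real.cos (ω * t) + Real.cos (k2 * t) - Real.cos (k3 * t) - Real.cos (k4 * t))
        / (4 * α * β) := by
    intro t
    unfold waveSymbolMod waveSymbol
    rw [← hαdef, ← hβdef]
    rw [show ω * t = t * α - t * β - τ * t by rw [hωdef]; ring,
        show k2 * t = t * α - t * β + τ * t by rw [hk2def]; ring,
        show k3 * t = t * α + t * β - τ * t by rw [hk3def]; ring,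
        show k4 * t = t * α + t * β + τ * t by rw [hk4def]; ring,
        ← trig4]
    field_simp
  have ic : ∀ k : ℝ, IntervalIntegrable (fun t => Real.cos (k * t)) volume 0 T :=
    fun k => (Real.continuous_cos.comp (continuous_const.mul continuous_id)).intervalIntegrable 0 T
  have hint : (∫ t in (0:ℝ)..T, waveSymbolMod τ t a * waveSymbol t b) =
      ((∫ t in (0:ℝ)..T, Real.cos (ω * t)) + (∫ t in (0:ℝ)..T, Real.cos (k2 * t))
        - (∫ t in (0:ℝ)..T, Real.cos (k3 * t)) - (∫ t in (0:ℝ)..T, Real.cos (k4 * t)))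
        / (4 * α * β) := by
    rw [intervalIntegral.integral_congr (g := fun t =>
      (Real.cos (ω * t) + Real.cos (k2 * t) - Real.cos (k3 * t) - Real.cos (k4 * t))
        / (4 * α * β)) (fun t _ => key t)]
    rw [intervalIntegral.integral_div]
    congr 1
    rw [intervalIntegral.integral_sub (((ic ω).add (ic k2)).sub (ic k3)) (ic k4),
        intervalIntegral.integral_sub ((ic ω).add (ic k2)) (ic k3),
        intervalIntegral.integral_add (ic ω) (ic k2)]
  -- bounds on the four integrals
  have hδT : δ * T = π / 2 := by
    rw [hTdef]; field_simp
  have hωT : |ω * T| ≤ π / 2 := by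
    rw [abs_mul, abs_of_pos hT0]
    have : |ω| ≤ δ := le_of_lt (abs_lt.2 ⟨hres1, hres2⟩)
    calc |ω| * T ≤ δ * T := by nlinarith
      _ = π / 2 := hδT
  have hmain : 2 / π * T ≤ ∫ t in (0:ℝ)..T, Real.cos (ω * t) := lowBound ω T hT0.le hωT
  have hmid : -(T / π) ≤ ∫ t in (0:ℝ)..T, Real.cos (k2 * t) := midBound k2 T hT0
  have hTπ : 1 / (8 * δ) = T / (4 * π) := by
    rw [hTdef]; field_simp; ring
  have hhigh : ∀ k : ℝ, 8 * δ < k → (∫ t in (0:ℝ)..T, Real.cos (k * t)) < T / (4 * π) := by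
    intro k hk
    have hk0 : (0:ℝ) < k := lt_trans (by positivity) hk
    have h1 : |∫ t in (0:ℝ)..T, Real.cos (k * t)| ≤ 1 / |k| := highBound k T hk0.ne'
    rw [abs_of_pos hk0] at h1
    have h2 : 1 / k < 1 / (8 * δ) := by
      apply one_div_lt_one_div_of_lt (by positivity) hk
    calc (∫ t in (0:ℝ)..T, Real.cos (k * t)) ≤ 1 / k := (le_abs_self _).trans h1
      _ < 1 / (8 * δ) := h2
      _ = T / (4 * π) := hTπ
  have h3 := hhigh k3 hk3pos
  have h4 := hhigh k4 hk4pos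
  set S := (∫ t in (0:ℝ)..T, Real.cos (ω * t)) + (∫ t in (0:ℝ)..T, Real.cos (k2 * t))
    - (∫ t in (0:ℝ)..T, Real.cos (k3 * t)) - (∫ t in (0:ℝ)..T, Real.cos (k4 * t)) with hSdef
  have harith : 2 / π * T - T / π - T / (4 * π) - T / (4 * π) = T / (2 * π) := by
    field_simp; ring
  have hS : T / (2 * π) < S := by
    rw [hSdef]; linarith
  have hSpos : 0 < S := lt_trans (by positivity) hS
  have habs : |∫ t in (0:ℝ)..T, waveSymbolMod τ t a * waveSymbol t b| = S / (4 * α * β) := by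
    rw [hint]; exact abs_of_pos (by positivity)
  rw [habs]
  calc 1 / (8 * π * α * β) = 1 / T * ((T / (2 * π)) / (4 * α * β)) := by
        field_simp; ring
    _ < 1 / T * (S / (4 * α * β)) := by gcongr
end

section
/- Let $0 < \beta \leq 1$ and $0 < t' < t$, and suppose $F : [0,\infty) \to [0,\infty)$ satisfies $F(r) \leq \frac{\mathbf{1}_{[0,t+t']}(r)}{\sinh(\max(t - t', r))}$ for all $r \geq 0$. Then for any $T > 0$, $\int_0^{2T} \sinh(r)\,(1+r)\,e^{-\beta r}\,F(r)\,dr \leq \frac{4}{\beta^2}\,e^{-\frac{\beta}{4}(t - t')}$. -/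
open MeasureTheory intervalIntegral Real

private lemma poly_le_exp_aux (u : ℝ) (hu : 0 ≤ u) :
    u^2 + 2*u + 2 ≤ 4 * Real.exp (3*u/4) := by
  have h1 : (1 + u/4) ≤ Real.exp (u/4) := by
    have := Real.add_one_le_exp (u/4); linarith
  have h0 : (0:ℝ) ≤ 1 + u/4 := by linarith
  have h3 : (1 + u/4)^3 ≤ Real.exp (u/4)^3 := pow_le_pow_left₀ h0 h1 3
  have he : Real.exp (u/4)^3 = Real.exp (3*u/4) := by
    rw [← Real.exp_nat_mul]; norm_num; ring_nf
  rw [he] at h3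
  nlinarith [mul_nonneg hu (sq_nonneg (u - 2))]

private lemma sinh_le_exp_mul_aux (r s : ℝ) (hr : r ≤ s) :
    Real.sinh r ≤ Real.exp (r - s) * Real.sinh s := by
  rw [Real.sinh_eq, Real.sinh_eq]
  have h1 : Real.exp (r - s) * Real.exp s = Real.exp r := by
    rw [← Real.exp_add]; ring_nf
  have h2 : Real.exp (r - s) * Real.exp (-s) = Real.exp (r - 2*s) := by
    rw [← Real.exp_add]; ring_nf
  have h3 : Real.exp (r - 2*s) ≤ Real.exp (-r) := Real.exp_le_exp.mpr (by linarith)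
  nlinarith

private lemma antideriv_aux (β : ℝ) (hβ : β ≠ 0) (r : ℝ) :
    HasDerivAt (fun x => -((1+x)/β + 1/β^2) * Real.exp (-β*x))
      ((1+r) * Real.exp (-β*r)) r := by
  have h1 : HasDerivAt (fun x : ℝ => -((1+x)/β + 1/β^2)) (-(1/β)) r :=
    ((((hasDerivAt_id r).const_add 1).div_const β).add_const (1/β^2)).neg
  have h2 : HasDerivAt (fun x : ℝ => Real.exp (-β*x)) (-β * Real.exp (-β*r)) r := by
    have h := (Real.hasDerivAt_exp (-β*r)).comp r ((hasDerivAt_id r).const_mul (-β))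
    refine h.congr_deriv ?_
    ring
  have := h1.mul h2
  refine this.congr_deriv ?_
  field_simp
  ring

/-- Integral estimate for the radial correlation of two Abel wave kernels: if
`0 < β ≤ 1`, `0 < t' < t`, and `F(r) ≤ 1_{[0,t+t']}(r)/sinh(max(t-t',r))`, then
`∫₀^{2T} sinh(r)(1+r)e^{-βr} F(r) dr ≤ (4/β²) e^{-β(t-t')/4}`. -/
theorem radial_correlation_integral_bound (β t t' T : ℝ)
    (hβ0 : 0 < β) (hβ1 : β ≤ 1) (ht'0 : 0 < t') (ht't : t' < t) (hT : 0 < T)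
    (F : ℝ → ℝ) (hFnn : ∀ r, 0 ≤ r → 0 ≤ F r)
    (hFbound : ∀ r, 0 ≤ r →
      F r ≤ (if r ≤ t + t' then (1:ℝ) else 0) / Real.sinh (max (t - t') r)) :
    ∫ r in (0:ℝ)..(2*T), Real.sinh r * (1 + r) * Real.exp (-β * r) * F r
      ≤ (4 / β ^ 2) * Real.exp (-(β / 4) * (t - t')) := by
  set s := t - t' with hs_def
  have hs : 0 < s := by simp [hs_def]; linarith
  have hβ2 : (0:ℝ) < β^2 := by positivity
  have hRHSpos : (0:ℝ) < (4 / β ^ 2) * Real.exp (-(β / 4) * s) := by positivity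
  set f : ℝ → ℝ := fun r => Real.sinh r * (1 + r) * Real.exp (-β * r) * F r with hf_def
  by_cases hInt : IntervalIntegrable f volume 0 (2*T)
  swap
  · rw [intervalIntegral.integral_undef hInt]
    exact hRHSpos.le
  -- pointwise bounds
  have P1 : ∀ r, 0 ≤ r → r ≤ s → f r ≤ (1+s) * Real.exp (-β*s) := by
    intro r hr0 hrs
    have hsinh_s : 0 < Real.sinh s := Real.sinh_pos_iff.mpr hs
    have hA : 0 ≤ Real.sinh r * (1 + r) * Real.exp (-β * r) :=
      mul_nonneg (mul_nonneg (Real.sinh_nonneg_iff.mpr hr0) (by linarith)) (Real.exp_pos _).le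
    have h1 := mul_le_mul_of_nonneg_left (hFbound r hr0) hA
    rw [max_eq_left hrs] at h1
    by_cases hind : r ≤ t + t'
    · rw [if_pos hind] at h1
      have hexp : Real.exp (r - s) * Real.exp (-β*r) ≤ Real.exp (-β*s) := by
        rw [← Real.exp_add]
        apply Real.exp_le_exp.mpr
        nlinarith
      have h2 : Real.sinh r * (1 + r) * Real.exp (-β * r) * (1 / Real.sinh s)
          ≤ (1+s) * Real.exp (-β*s) := by
        rw [mul_one_div, div_le_iff₀ hsinh_s]
        have hsr := sinh_le_exp_mul_aux r s hrs
        calc Real.sinh r * (1 + r) * Real.exp (-β * r)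
            ≤ (Real.exp (r - s) * Real.sinh s) * (1 + r) * Real.exp (-β * r) := by
              apply mul_le_mul_of_nonneg_right
                (mul_le_mul_of_nonneg_right hsr (by linarith)) (Real.exp_pos _).le
          _ = Real.sinh s * ((1 + r) * (Real.exp (r - s) * Real.exp (-β * r))) := by ring
          _ ≤ Real.sinh s * ((1 + s) * Real.exp (-β * s)) := by
              apply mul_le_mul_of_nonneg_left _ hsinh_s.le
              exact mul_le_mul (by linarith) hexp
                (mul_nonneg (Real.exp_pos _).le (Real.exp_pos _).le) (by linarith)
          _ = (1 + s) * Real.exp (-β * s) * Real.sinh s := by ring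
      calc f r ≤ Real.sinh r * (1 + r) * Real.exp (-β * r) * (1 / Real.sinh s) := h1
        _ ≤ (1+s) * Real.exp (-β*s) := h2
    · rw [if_neg hind] at h1
      simp only [zero_div, mul_zero] at h1
      have : (0:ℝ) ≤ (1+s) * Real.exp (-β*s) := by positivity
      calc f r ≤ 0 := h1
        _ ≤ _ := this
  have P2 : ∀ r, s ≤ r → f r ≤ (1+r) * Real.exp (-β*r) := by
    intro r hrs
    have hr0 : 0 ≤ r := le_trans hs.le hrs
    have hsinh_r : 0 < Real.sinh r := Real.sinh_pos_iff.mpr (lt_of_lt_of_le hs hrs)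
    have hA : 0 ≤ Real.sinh r * (1 + r) * Real.exp (-β * r) :=
      mul_nonneg (mul_nonneg (Real.sinh_nonneg_iff.mpr hr0) (by linarith)) (Real.exp_pos _).le
    have h1 := mul_le_mul_of_nonneg_left (hFbound r hr0) hA
    rw [max_eq_right hrs] at h1
    by_cases hind : r ≤ t + t'
    · rw [if_pos hind] at h1
      have h2 : Real.sinh r * (1 + r) * Real.exp (-β * r) * (1 / Real.sinh r)
          = (1+r) * Real.exp (-β*r) := by
        field_simp
      calc f r ≤ Real.sinh r * (1 + r) * Real.exp (-β * r) * (1 / Real.sinh r) := h1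
        _ = (1+r) * Real.exp (-β*r) := h2
    · rw [if_neg hind] at h1
      simp only [zero_div, mul_zero] at h1
      have : (0:ℝ) ≤ (1+r) * Real.exp (-β*r) := by positivity
      calc f r ≤ 0 := h1
        _ ≤ _ := this
  -- key numeric inequality
  have key : (s*(1+s) + ((1+s)/β + 1/β^2)) * Real.exp (-β*s)
      ≤ (4 / β ^ 2) * Real.exp (-(β / 4) * s) := by
    have hp := poly_le_exp_aux (β*s) (by positivity)
    have hkey2 : s*(1+s) + ((1+s)/β + 1/β^2) ≤ (4/β^2) * Real.exp (3*(β*s)/4) := by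
      rw [div_mul_eq_mul_div, le_div_iff₀ hβ2]
      have e1 : β*(β*s) ≤ β*s := by nlinarith [mul_nonneg (sub_nonneg.mpr hβ1) (mul_nonneg hβ0.le hs.le)]
      have e2 : β*(1+s)*β ≤ 1 + β*s := by nlinarith
      have e3 : (s*(1+s) + ((1+s)/β + 1/β^2)) * β^2
          = (β*s)*(β*(1+s)) + β*(1+s) + 1 := by field_simp; ring
      nlinarith
    have e4 : Real.exp (3*(β*s)/4) * Real.exp (-β*s) = Real.exp (-(β / 4) * s) := by
      rw [← Real.exp_add]; ring_nf
    calc (s*(1+s) + ((1+s)/β + 1/β^2)) * Real.exp (-β*s)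
        ≤ ((4/β^2) * Real.exp (3*(β*s)/4)) * Real.exp (-β*s) := by
          apply mul_le_mul_of_nonneg_right hkey2 (Real.exp_pos _).le
      _ = (4 / β ^ 2) * Real.exp (-(β / 4) * s) := by rw [mul_assoc, e4]
  have hc1 : (0:ℝ) ≤ (1+s) * Real.exp (-β*s) := by positivity
  rcases le_or_gt (2*T) s with hTs | hTs
  · -- 2T ≤ s : bound by constant
    have hmono : ∫ r in (0:ℝ)..(2*T), f r ≤ ∫ r in (0:ℝ)..(2*T), (1+s) * Real.exp (-β*s) := by
      apply intervalIntegral.integral_mono_on (by linarith) hInt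
        (intervalIntegrable_const)
      intro x hx
      exact P1 x hx.1 (le_trans hx.2 hTs)
    rw [intervalIntegral.integral_const, smul_eq_mul] at hmono
    have : (2*T - 0) * ((1+s) * Real.exp (-β*s)) ≤ s * ((1+s) * Real.exp (-β*s)) := by
      apply mul_le_mul_of_nonneg_right (by linarith) hc1
    calc ∫ r in (0:ℝ)..(2*T), f r ≤ (2*T - 0) * ((1+s) * Real.exp (-β*s)) := hmono
      _ ≤ s * ((1+s) * Real.exp (-β*s)) := this
      _ ≤ (s*(1+s) + ((1+s)/β + 1/β^2)) * Real.exp (-β*s) := by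
          have : (0:ℝ) ≤ ((1+s)/β + 1/β^2) * Real.exp (-β*s) := by positivity
          nlinarith [Real.exp_pos (-β*s)]
      _ ≤ _ := key
  · -- s < 2T : split the integral
    have hI1 : IntervalIntegrable f volume 0 s :=
      hInt.mono_set (Set.uIcc_subset_uIcc (by simp) (by
        rw [Set.mem_uIcc]; left; constructor <;> linarith))
    have hI2 : IntervalIntegrable f volume s (2*T) :=
      hInt.mono_set (Set.uIcc_subset_uIcc (by
        rw [Set.mem_uIcc]; left; constructor <;> linarith) (by simp))
    have hsplit : (∫ r in (0:ℝ)..s, f r) + (∫ r in s..(2*T), f r)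
        = ∫ r in (0:ℝ)..(2*T), f r :=
      intervalIntegral.integral_add_adjacent_intervals hI1 hI2
    have hpart1 : ∫ r in (0:ℝ)..s, f r ≤ s * ((1+s) * Real.exp (-β*s)) := by
      have := intervalIntegral.integral_mono_on hs.le hI1 intervalIntegrable_const
        (fun x hx => P1 x hx.1 hx.2)
      rw [intervalIntegral.integral_const, smul_eq_mul] at this
      linarith
    have hcont : Continuous (fun r : ℝ => (1+r) * Real.exp (-β*r)) :=
      (continuous_const.add continuous_id).mul (Real.continuous_exp.comp (continuous_const.mul continuous_id))
    have hpart2 : ∫ r in s..(2*T), f r ≤ ((1+s)/β + 1/β^2) * Real.exp (-β*s) := by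
      have hmono2 : ∫ r in s..(2*T), f r ≤ ∫ r in s..(2*T), (1+r) * Real.exp (-β*r) := by
        apply intervalIntegral.integral_mono_on (by linarith) hI2
          (hcont.intervalIntegrable _ _)
        intro x hx
        exact P2 x hx.1
      have hcomp : ∫ r in s..(2*T), (1+r) * Real.exp (-β*r)
          = (-((1+2*T)/β + 1/β^2) * Real.exp (-β*(2*T)))
            - (-((1+s)/β + 1/β^2) * Real.exp (-β*s)) := by
        apply intervalIntegral.integral_eq_sub_of_hasDerivAt
          (fun x _ => antideriv_aux β hβ0.ne' x)
        exact hcont.intervalIntegrable _ _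
      have hneg : -((1+2*T)/β + 1/β^2) * Real.exp (-β*(2*T)) ≤ 0 := by
        have h1 : (0:ℝ) < (1+2*T)/β + 1/β^2 := by positivity
        nlinarith [Real.exp_pos (-β*(2*T))]
      rw [hcomp] at hmono2
      nlinarith
    have := add_le_add hpart1 hpart2
    rw [hsplit] at this
    calc ∫ r in (0:ℝ)..(2*T), f r
        ≤ s * ((1+s) * Real.exp (-β*s)) + ((1+s)/β + 1/β^2) * Real.exp (-β*s) := this
      _ = (s*(1+s) + ((1+s)/β + 1/β^2)) * Real.exp (-β*s) := by ring
      _ ≤ _ := key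
end
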